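/- arXiv:0906.4326 — 6 statements merged into one kernel-verified Lean document; each statement's English description precedes it below -/
import Mathlib

section
/- A pure strategy σ for player i in a finite normal-form game Γ is rationalizable if and only if it is rationalizable′. -/
/-!
A rationalizable set profile `Z` is a post-fixed point `Z ≤ F Z` of the monotone operator `F`
sending a profile of strategy sets to the profile of best responses to beliefs concentrated on it;
repeating it after `univ` gives a rationalizable′ sequence. Conversely a rationalizable′ sequence
`X` satisfies `X (k + 1) ≤ F (X k)` and takes only finitely many values, so `X a = X b` for some
`a < b`, and the union of the cycle `X a, …, X (b - 1)` is a post-fixed point of `F`.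
-/

open MeasureTheory

namespace IA

set_option linter.unusedVariables false

variable {n : ℕ}

/-! ### Finite normal-form games -/

/-- `Oth S i`: profiles of strategies of the players other than `i` (the set `Σ_{-i}`). -/
def Oth (S : Fin n → Type) (i : Fin n) : Type := ∀ j : {j : Fin n // j ≠ i}, S j.1

instance (S : Fin n → Type) [∀ j, Fintype (S j)] (i : Fin n) : Fintype (Oth S i) := by
  unfold Oth; infer_instance

instance (S : Fin n → Type) [∀ j, Nonempty (S j)] (i : Fin n) : Nonempty (Oth S i) := by
  unfold Oth; infer_instance

variable {S : Fin n → Type}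

/-- Glue a strategy for player `i` with a profile for the other players. -/
def ext (i : Fin n) (σ : S i) (τ : Oth S i) : ∀ j, S j :=
  fun j => if h : j = i then cast (congrArg S h).symm σ else τ ⟨j, h⟩

section
variable [∀ j, Fintype (S j)]

/-- Expected utility of the pure strategy `σ` of player `i` against the belief `μ` on `Σ_{-i}`. -/
noncomputable def EU (u : ∀ i : Fin n, (∀ j, S j) → ℝ) (i : Fin n) (σ : S i)
    (μ : Oth S i → ℝ) : ℝ :=
  ∑ τ : Oth S i, μ τ * u i (ext i σ τ)

/-- `μ` is a probability distribution on `Σ_{-i}` (a belief of player `i`). -/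
def IsBelief {i : Fin n} (μ : Oth S i → ℝ) : Prop :=
  (∀ τ, 0 ≤ μ τ) ∧ ∑ τ, μ τ = 1

/-- `σ` is a best response (maximizes expected utility over `Σ_i`) to belief `μ`. -/
def BestResponse (u : ∀ i : Fin n, (∀ j, S j) → ℝ) (i : Fin n) (σ : S i)
    (μ : Oth S i → ℝ) : Prop :=
  ∀ σ' : S i, EU u i σ' μ ≤ EU u i σ μ

end

/-- The product `Π_{j' ≠ j} X_{j'}` of sets of strategies, viewed inside `Σ_{-j}`. -/
def OthSet (X : ∀ j : Fin n, Set (S j)) (j : Fin n) : Set (Oth S j) :=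
  {τ | ∀ j', τ j' ∈ X j'.1}

/-! ### Rationalizability -/

section
variable [∀ j, Fintype (S j)]

/-- Pearce's first definition of rationalizability. -/
def Rationalizable (u : ∀ i : Fin n, (∀ j, S j) → ℝ) (i : Fin n) (σ : S i) : Prop :=
  ∃ (Z : ∀ j : Fin n, Set (S j)) (μ : ∀ j : Fin n, S j → Oth S j → ℝ),
    σ ∈ Z i ∧
    ∀ j : Fin n, ∀ σ' ∈ Z j,
      IsBelief (μ j σ') ∧ (∀ τ, 0 < μ j σ' τ → τ ∈ OthSet Z j) ∧
      BestResponse u j σ' (μ j σ')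

/-- Pearce's second definition of rationalizability, via iterated deletion. -/
def Rationalizable' (u : ∀ i : Fin n, (∀ j, S j) → ℝ) (i : Fin n) (σ : S i) : Prop :=
  ∃ (X : ℕ → ∀ j : Fin n, Set (S j)) (μ : ℕ → ∀ j : Fin n, S j → Oth S j → ℝ),
    (∀ j, X 0 j = Set.univ) ∧
    (∀ k, σ ∈ X k i) ∧
    ∀ (k : ℕ) (j : Fin n), ∀ σ' ∈ X (k+1) j,
      IsBelief (μ k j σ') ∧ (∀ τ, 0 < μ k j σ' τ → τ ∈ OthSet (X k) j) ∧
      BestResponse u j σ' (μ k j σ')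

end

theorem exists_lt_map_eq_of_finite {β : Type*} [Finite β] (f : ℕ → β) :
    ∃ a b, a < b ∧ f a = f b := by
  obtain ⟨x, y, hne, he⟩ := Finite.exists_ne_map_eq_of_infinite f
  rcases hne.lt_or_gt with h | h
  · exact ⟨x, y, h, he⟩
  · exact ⟨y, x, h, he.symm⟩

theorem iSup_Ico_le_map_of_periodic {α : Type*} [CompleteLattice α] {F : α → α}
    (hF : Monotone F) {X : ℕ → α} (hX : ∀ k, X (k + 1) ≤ F (X k)) {a b : ℕ}
    (hper : X a = X b) :
    ⨆ k ∈ Finset.Ico a b, X k ≤ F (⨆ k ∈ Finset.Ico a b, X k) := by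
  have hstep : ∀ k ∈ Finset.Ioc a b, X k ≤ F (⨆ k ∈ Finset.Ico a b, X k) := by
    intro k hk
    obtain ⟨hak, hkb⟩ := Finset.mem_Ioc.mp hk
    obtain ⟨m, rfl⟩ : ∃ m, k = m + 1 := ⟨k - 1, by omega⟩
    exact (hX m).trans (hF (le_iSup₂_of_le m (Finset.mem_Ico.mpr ⟨by omega, by omega⟩) le_rfl))
  refine iSup₂_le fun k hk => ?_
  obtain ⟨hak, hkb⟩ := Finset.mem_Ico.mp hk
  rcases hak.eq_or_lt with rfl | hak
  · exact hper ▸ hstep b (Finset.mem_Ioc.mpr ⟨hkb, le_rfl⟩)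
  · exact hstep k (Finset.mem_Ioc.mpr ⟨hak, hkb.le⟩)

theorem othSet_mono {Y Y' : ∀ j : Fin n, Set (S j)} (h : Y ≤ Y') (j : Fin n) :
    OthSet Y j ⊆ OthSet Y' j :=
  fun _ hτ j' => h j'.1 (hτ j')

section
variable [∀ j, Fintype (S j)]

def bestResponses (u : ∀ i : Fin n, (∀ j, S j) → ℝ) (Y : ∀ j : Fin n, Set (S j)) :
    ∀ j : Fin n, Set (S j) :=
  fun j => {σ | ∃ μ : Oth S j → ℝ,
    IsBelief μ ∧ (∀ τ, 0 < μ τ → τ ∈ OthSet Y j) ∧ BestResponse u j σ μ}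

theorem bestResponses_mono (u : ∀ i : Fin n, (∀ j, S j) → ℝ) :
    Monotone (bestResponses u) := by
  rintro Y Y' h j σ ⟨μ, hμ, hsupp, hbest⟩
  exact ⟨μ, hμ, fun τ hτ => othSet_mono h j (hsupp τ hτ), hbest⟩

theorem rationalizable_iff_exists_le_bestResponses
    (u : ∀ i : Fin n, (∀ j, S j) → ℝ) (i : Fin n) (σ : S i) :
    Rationalizable u i σ ↔ ∃ Z, σ ∈ Z i ∧ Z ≤ bestResponses u Z := by
  constructor
  · rintro ⟨Z, μ, hσ, hZ⟩
    exact ⟨Z, hσ, fun j σ' hσ' => ⟨μ j σ', hZ j σ' hσ'⟩⟩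
  · rintro ⟨Z, hσ, hZ⟩
    choose! μ hμ using hZ
    exact ⟨Z, μ, hσ, hμ⟩

theorem rationalizable'_iff_exists_seq_le_bestResponses
    (u : ∀ i : Fin n, (∀ j, S j) → ℝ) (i : Fin n) (σ : S i) :
    Rationalizable' u i σ ↔ ∃ X : ℕ → ∀ j : Fin n, Set (S j),
      (∀ j, X 0 j = Set.univ) ∧ (∀ k, σ ∈ X k i) ∧
      ∀ k, X (k + 1) ≤ bestResponses u (X k) := by
  constructor
  · rintro ⟨X, μ, hX0, hσ, hX⟩
    exact ⟨X, hX0, hσ, fun k j σ' hσ' => ⟨μ k j σ', hX k j σ' hσ'⟩⟩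
  · rintro ⟨X, hX0, hσ, hX⟩
    choose! μ hμ using hX
    exact ⟨X, μ, hX0, hσ, hμ⟩

end

theorem rationalizable_iff_rationalizable'_general
    {S : Fin n → Type} [∀ j, Fintype (S j)]
    (u : ∀ i : Fin n, (∀ j, S j) → ℝ) (i : Fin n) (σ : S i) :
    Rationalizable u i σ ↔ Rationalizable' u i σ := by
  rw [rationalizable_iff_exists_le_bestResponses, rationalizable'_iff_exists_seq_le_bestResponses]
  constructor
  · rintro ⟨Z, hσ, hZ⟩
    let X : ℕ → ∀ j : Fin n, Set (S j) := fun k => if k = 0 then ⊤ else Z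
    have hZX : ∀ k, Z ≤ X k := fun k => by
      by_cases hk : k = 0 <;> simp [X, hk]
    refine ⟨X, fun j => rfl, fun k => hZX k i hσ, fun k => ?_⟩
    exact (if_neg k.succ_ne_zero).le.trans (hZ.trans (bestResponses_mono u (hZX k)))
  · rintro ⟨X, -, hσ, hX⟩
    obtain ⟨a, b, hab, hper⟩ := exists_lt_map_eq_of_finite X
    have hXa : X a ≤ ⨆ k ∈ Finset.Ico a b, X k :=
      le_iSup₂ (f := fun k _ => X k) a (Finset.mem_Ico.mpr ⟨le_rfl, hab⟩)
    exact ⟨_, hXa i (hσ a), iSup_Ico_le_map_of_periodic (bestResponses_mono u) hX hper⟩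

/-- Proposition: Pearce. A strategy is rationalizable iff it is
rationalizable′. -/
theorem rationalizable_iff_rationalizable'
    {S : Fin n → Type} [∀ j, Fintype (S j)] [∀ j, Nonempty (S j)]
    (u : ∀ i : Fin n, (∀ j, S j) → ℝ) (i : Fin n) (σ : S i) :
    Rationalizable u i σ ↔ Rationalizable' u i σ :=
  rationalizable_iff_rationalizable'_general u i σ

end IA
end

section
/- A pure strategy σ for player i is not strongly dominated by any mixed strategy of player i with respect to Σ′_{-i} if and only if there is a belief μ of player i whose support is contained in Σ′_{-i} such that σ is a best response to μ. -/
/-!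
Let `A σ' τ = u_i(σ', τ) - u_i(σ, τ)` be the gain from deviating from `σ` to `σ'`, with the
columns restricted to `Σ′_{-i}`. A mixed strategy strongly dominating `σ` is a row mixture `ν`
with `ν A > 0` in every column, and a belief to which `σ` is a best response is a column mixture
`μ` with `A μ ≤ 0`. By von Neumann's minimax theorem the zero-sum game `A` has a saddle point
`(μ, ν)`, and the sign of its value decides which of the two alternatives holds.
-/

open MeasureTheory

namespace IA

set_option linter.unusedVariables false

variable {n : ℕ}

variable {S : Fin n → Type}

/-! ### Mixed strategies, weak/strong dominance, iterated deletion -/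

/-- a probability distribution on a finite type -/
def IsDist {α : Type} [Fintype α] (ν : α → ℝ) : Prop := (∀ a, 0 ≤ ν a) ∧ ∑ a, ν a = 1

section
variable [∀ j, Fintype (S j)]

/-- Expected utility of the mixed strategy `ν` of player `i` against `τ_{-i}`. -/
noncomputable def EUmix (u : ∀ i : Fin n, (∀ j, S j) → ℝ) (i : Fin n) (ν : S i → ℝ)
    (τ : Oth S i) : ℝ :=
  ∑ σ : S i, ν σ * u i (ext i σ τ)

/-- The mixed strategy `ν` strongly dominates the pure strategy `σ` with respect to `Y ⊆ Σ_{-i}`. -/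
def SDom (u : ∀ i : Fin n, (∀ j, S j) → ℝ) (i : Fin n) (ν : S i → ℝ) (σ : S i)
    (Y : Set (Oth S i)) : Prop :=
  ∀ τ ∈ Y, u i (ext i σ τ) < EUmix u i ν τ

/-- The mixed strategy `ν` weakly dominates the pure strategy `σ` with respect to `Y ⊆ Σ_{-i}`. -/
def WDom (u : ∀ i : Fin n, (∀ j, S j) → ℝ) (i : Fin n) (ν : S i → ℝ) (σ : S i)
    (Y : Set (Oth S i)) : Prop :=
  (∀ τ ∈ Y, u i (ext i σ τ) ≤ EUmix u i ν τ) ∧ (∃ τ ∈ Y, u i (ext i σ τ) < EUmix u i ν τ)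

/-- `σ` is not weakly dominated by any mixed strategy of `i` with respect to `Y`. -/
def NotWDominated (u : ∀ i : Fin n, (∀ j, S j) → ℝ) (i : Fin n) (σ : S i)
    (Y : Set (Oth S i)) : Prop :=
  ¬ ∃ ν : S i → ℝ, IsDist ν ∧ WDom u i ν σ Y

/-- `Xiter u k j`: the strategies of player `j` surviving `k` rounds of iterated deletion of
weakly dominated strategies. -/
def Xiter (u : ∀ i : Fin n, (∀ j, S j) → ℝ) : ℕ → ∀ j : Fin n, Set (S j)
  | 0, _ => Set.univ
  | (k+1), j => {σ | σ ∈ Xiter u k j ∧ NotWDominated u j σ (OthSet (Xiter u k) j)}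

end

open Matrix Function

theorem _root_.LinearMap.exists_isSaddlePointOn {E F : Type*}
    [AddCommGroup E] [Module ℝ E] [TopologicalSpace E] [IsTopologicalAddGroup E]
    [ContinuousSMul ℝ E] [T2Space E] [FiniteDimensional ℝ E]
    [AddCommGroup F] [Module ℝ F] [TopologicalSpace F] [IsTopologicalAddGroup F]
    [ContinuousSMul ℝ F] [T2Space F] [FiniteDimensional ℝ F]
    (f : E →ₗ[ℝ] F →ₗ[ℝ] ℝ) {X : Set E} {Y : Set F}
    (neX : X.Nonempty) (cX : Convex ℝ X) (kX : IsCompact X)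
    (neY : Y.Nonempty) (cY : Convex ℝ Y) (kY : IsCompact Y) :
    ∃ a ∈ X, ∃ b ∈ Y, IsSaddlePointOn X Y (fun x y => f x y) a b :=
  Sion.exists_isSaddlePointOn neX cX kX
    (fun y _ =>
      (f.flip y).continuous_of_finiteDimensional.lowerSemicontinuous.lowerSemicontinuousOn _)
    (fun y _ => ((f.flip y).convexOn cX).quasiconvexOn)
    cY neY kY
    (fun x _ => (f x).continuous_of_finiteDimensional.upperSemicontinuous.upperSemicontinuousOn _)
    (fun x _ => ((f x).concaveOn cY).quasiconcaveOn)

theorem _root_.convex_setOf_support_subset {𝕜 β : Type*} [Semiring 𝕜] [PartialOrder 𝕜]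
    (Y : Set β) : Convex 𝕜 {μ : β → 𝕜 | support μ ⊆ Y} := by
  intro x hx y hy a b _ _ _
  refine (support_add _ _).trans (Set.union_subset ?_ ?_)
  · exact (support_const_smul_subset a x).trans hx
  · exact (support_const_smul_subset b y).trans hy

theorem _root_.isClosed_setOf_support_subset {β M : Type*} [TopologicalSpace M] [T1Space M]
    [Zero M] (Y : Set β) : IsClosed {μ : β → M | support μ ⊆ Y} := by
  simp only [support_subset_iff', Set.ofPred_forall]
  exact isClosed_iInter fun b => isClosed_iInter fun _ =>
    isClosed_singleton.preimage (continuous_apply b)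

section Simplex

variable {α β : Type*} [Fintype α] [Fintype β]

theorem _root_.single_one_mem_stdSimplex_inter_support_subset [DecidableEq β] {Y : Set β}
    {b : β} (hb : b ∈ Y) : Pi.single b 1 ∈ stdSimplex ℝ β ∩ {μ | support μ ⊆ Y} :=
  ⟨single_mem_stdSimplex ℝ b, Pi.support_single_subset.trans (Set.singleton_subset_iff.2 hb)⟩

theorem _root_.dotProduct_pos_of_mem_stdSimplex {Y : Set β} {v μ : β → ℝ}
    (hμ : μ ∈ stdSimplex ℝ β) (hμY : support μ ⊆ Y) (hv : ∀ b ∈ Y, 0 < v b) : 0 < v ⬝ᵥ μ := by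
  have hterm : ∀ b, μ b ≠ 0 → 0 < v b * μ b := fun b hb =>
    mul_pos (hv b (hμY hb)) ((hμ.1 b).lt_of_ne' hb)
  obtain ⟨b, hb⟩ : ∃ b, μ b ≠ 0 := by
    by_contra! h
    simpa [h] using hμ.2
  refine Finset.sum_pos' (fun b _ => ?_) ⟨b, Finset.mem_univ b, hterm b hb⟩
  by_cases hb : μ b = 0
  · simp [hb]
  · exact (hterm b hb).le

theorem _root_.Matrix.exists_vecMul_nonpos_of_mulVec_nonpos (A : Matrix α β ℝ) {Y : Set β}
    {ν : α → ℝ} {μ : β → ℝ} (hμ : μ ∈ stdSimplex ℝ β) (hμY : support μ ⊆ Y) (hAμ : A *ᵥ μ ≤ 0)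
    (hν : 0 ≤ ν) : ∃ b ∈ Y, (ν ᵥ* A) b ≤ 0 := by
  by_contra! hpos
  have hle : ν ⬝ᵥ A *ᵥ μ ≤ 0 :=
    Finset.sum_nonpos fun a _ => mul_nonpos_of_nonneg_of_nonpos (hν a) (hAμ a)
  rw [dotProduct_mulVec] at hle
  exact hle.not_gt (dotProduct_pos_of_mem_stdSimplex hμ hμY hpos)

theorem _root_.Matrix.exists_mulVec_nonpos_of_forall_exists_vecMul_nonpos [Nonempty α]
    (A : Matrix α β ℝ) {Y : Set β} (hY : Y.Nonempty)
    (h : ∀ ν ∈ stdSimplex ℝ α, ∃ b ∈ Y, (ν ᵥ* A) b ≤ 0) :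
    ∃ μ ∈ stdSimplex ℝ β, support μ ⊆ Y ∧ A *ᵥ μ ≤ 0 := by
  classical
  obtain ⟨b₀, hb₀⟩ := hY
  obtain ⟨μ, hμ, ν, hν, hsaddle⟩ := (toLinearMap₂' ℝ A).flip.exists_isSaddlePointOn
    ⟨_, single_one_mem_stdSimplex_inter_support_subset hb₀⟩
    ((convex_stdSimplex ℝ β).inter (convex_setOf_support_subset Y))
    ((isCompact_stdSimplex ℝ β).inter_right (isClosed_setOf_support_subset Y))
    ⟨_, single_mem_stdSimplex ℝ (Classical.arbitrary α)⟩ (convex_stdSimplex ℝ α)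
    (isCompact_stdSimplex ℝ α)
  obtain ⟨b, hbY, hb⟩ := h ν hν
  refine ⟨μ, hμ.1, hμ.2, fun a => ?_⟩
  have hsaddle_ab := hsaddle _ (single_one_mem_stdSimplex_inter_support_subset hbY) _
    (single_mem_stdSimplex ℝ a)
  simp only [LinearMap.flip_apply, toLinearMap₂'_apply', single_one_dotProduct,
    mulVec_single_one] at hsaddle_ab
  exact hsaddle_ab.trans hb

/-- Ville's theorem of the alternative. -/
theorem _root_.Matrix.exists_mulVec_nonpos_iff [Nonempty α] (A : Matrix α β ℝ) {Y : Set β}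
    (hY : Y.Nonempty) :
    (∃ μ ∈ stdSimplex ℝ β, support μ ⊆ Y ∧ A *ᵥ μ ≤ 0) ↔
      ∀ ν ∈ stdSimplex ℝ α, ∃ b ∈ Y, (ν ᵥ* A) b ≤ 0 :=
  ⟨fun ⟨_, hμ, hμY, hAμ⟩ _ hν => A.exists_vecMul_nonpos_of_mulVec_nonpos hμ hμY hAμ hν.1,
    A.exists_mulVec_nonpos_of_forall_exists_vecMul_nonpos hY⟩

end Simplex

def deviationGain (u : ∀ i : Fin n, (∀ j, S j) → ℝ) (i : Fin n) (σ : S i) :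
    Matrix (S i) (Oth S i) ℝ :=
  of fun σ' τ => u i (ext i σ' τ) - u i (ext i σ τ)

section Deviation

variable [∀ j, Fintype (S j)] (u : ∀ i : Fin n, (∀ j, S j) → ℝ) (i : Fin n) (σ : S i)

theorem vecMul_deviationGain {ν : S i → ℝ} (hν : ∑ σ', ν σ' = 1) (τ : Oth S i) :
    (ν ᵥ* deviationGain u i σ) τ = EUmix u i ν τ - u i (ext i σ τ) := by
  simp only [vecMul, dotProduct, deviationGain, of_apply, mul_sub, Finset.sum_sub_distrib,
    ← Finset.sum_mul, hν, one_mul, EUmix]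

theorem deviationGain_mulVec (μ : Oth S i → ℝ) (σ' : S i) :
    (deviationGain u i σ *ᵥ μ) σ' = EU u i σ' μ - EU u i σ μ := by
  simp only [mulVec, dotProduct, deviationGain, of_apply, sub_mul, Finset.sum_sub_distrib, EU,
    mul_comm (μ _)]

theorem bestResponse_iff_deviationGain_mulVec_nonpos (μ : Oth S i → ℝ) :
    BestResponse u i σ μ ↔ deviationGain u i σ *ᵥ μ ≤ 0 := by
  simp only [BestResponse, Pi.le_def, deviationGain_mulVec, Pi.zero_apply, sub_nonpos]

theorem exists_sDom_iff (Y : Set (Oth S i)) :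
    (∃ ν, IsDist ν ∧ SDom u i ν σ Y) ↔
      ∃ ν ∈ stdSimplex ℝ (S i), ∀ τ ∈ Y, 0 < (ν ᵥ* deviationGain u i σ) τ := by
  refine exists_congr fun ν => and_congr_right fun hν => forall₂_congr fun τ _ => ?_
  rw [vecMul_deviationGain u i σ hν.2, sub_pos]

end Deviation

theorem not_strongly_dominated_iff_best_response_general
    {S : Fin n → Type} [∀ j, Fintype (S j)]
    (u : ∀ i : Fin n, (∀ j, S j) → ℝ) (i : Fin n) (σ : S i)
    (Y : Set (Oth S i)) (hY : Y.Nonempty) :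
    (¬ ∃ ν : S i → ℝ, IsDist ν ∧ SDom u i ν σ Y) ↔
      ∃ μ : Oth S i → ℝ, IsBelief μ ∧ (∀ τ, 0 < μ τ → τ ∈ Y) ∧ BestResponse u i σ μ := by
  have : Nonempty (S i) := ⟨σ⟩
  have support_subset_iff_of_belief {μ : Oth S i → ℝ} (hμ : IsBelief μ) :
      support μ ⊆ Y ↔ ∀ τ, 0 < μ τ → τ ∈ Y := by
    simp only [support_subset_iff, (hμ.1 _).lt_iff_ne']
  simp only [exists_sDom_iff, not_exists, not_and, not_forall, not_lt, exists_prop,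
    ← (deviationGain u i σ).exists_mulVec_nonpos_iff hY,
    bestResponse_iff_deviationGain_mulVec_nonpos]
  exact exists_congr fun μ => and_congr_right fun hμ =>
    and_congr_left' (support_subset_iff_of_belief hμ)

/-- Pearce. `σ` is not strongly dominated by any mixed strategy with respect
to `Y` iff `σ` is a best response to some belief whose support is contained in `Y`. -/
theorem not_strongly_dominated_iff_best_response
    {S : Fin n → Type} [∀ j, Fintype (S j)] [∀ j, Nonempty (S j)]
    (u : ∀ i : Fin n, (∀ j, S j) → ℝ) (i : Fin n) (σ : S i)
    (Y : Set (Oth S i)) (hY : Y.Nonempty) :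
    (¬ ∃ ν : S i → ℝ, IsDist ν ∧ SDom u i ν σ Y) ↔
      ∃ μ : Oth S i → ℝ, IsBelief μ ∧ (∀ τ, 0 < μ τ → τ ∈ Y) ∧ BestResponse u i σ μ :=
  not_strongly_dominated_iff_best_response_general u i σ Y hY

end IA
end

section
/- Truth lemma for the canonical structure: for every formula ψ ∈ L4(Γ) and every L4-realizable set Φ, (M^c, ω_Φ) ⊨ ψ if and only if ψ ∈ Φ. -/
/-! Every state `ω_Φ` of the canonical structure is realized by a state `ω` of some
structure `M`, and by construction the canonical probability of `F_φ` at `ω_Φ` is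
`PR_i(ω)([[φ]]_M)`. Induction on `ψ` then shows that `ψ` holds at `ω_Φ` iff it holds at `ω`.
The belief operators need no control over which canonical sets are measurable: `B_i φ` holds
iff `¬φ` has outer probability `0`, and `⟨B_i⟩ φ` iff it has outer probability `< 1`. -/

open MeasureTheory

namespace IA

set_option linter.unusedVariables false

variable {n : ℕ}

variable {S : Fin n → Type}

/-! ### Probability structures appropriate for a game -/

/-- A probability structure appropriate for the game with strategy sets `S`. -/
structure PStruct (n : ℕ) (S : Fin n → Type) where
  Ω : Type
  F : MeasurableSpace Ω
  s : Ω → ∀ j, S j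
  PR : Fin n → Ω → @Measure Ω F
  PR_prob : ∀ i ω, IsProbabilityMeasure (PR i ω)
  meas_play : ∀ (i : Fin n) (σ : S i), MeasurableSet[F] {ω | s ω i = σ}
  knows_play : ∀ i ω, PR i ω {ω' | s ω' i = s ω i} = 1
  meas_PR : ∀ (i : Fin n) (π : @Measure Ω F), MeasurableSet[F] {ω | PR i ω = π}
  knows_PR : ∀ i ω, PR i ω {ω' | PR i ω' = PR i ω} = 1

section
variable [∀ j, Fintype (S j)]

/-- The belief of player `i` at state `ω` about the strategies of the other players,
i.e. the marginal of `PR_i(ω)` on `Σ_{-i}` via `s_{-i}`. -/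
noncomputable def margBelief (M : PStruct n S) (i : Fin n) (ω : M.Ω) (τ : Oth S i) : ℝ :=
  (M.PR i ω {ω' | ∀ j : {j : Fin n // j ≠ i}, M.s ω' j.1 = τ j}).toReal

/-- `RAT_i` holds at `ω`: player `i`'s strategy at `ω` is a best response to the belief
induced by `PR_i(ω)`. -/
def SatRAT (u : ∀ i : Fin n, (∀ j, S j) → ℝ) (M : PStruct n S) (i : Fin n) (ω : M.Ω) : Prop :=
  BestResponse u i (M.s ω i) (margBelief M i ω)

end

/-! ### The language L4 (countable conjunctions and `pr_i(φ) > α` for real `α ∈ [0,1]`) -/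

inductive L4 (n : ℕ) (S : Fin n → Type) : Type where
  | tt : L4 n S
  | RAT (i : Fin n) : L4 n S
  | play (i : Fin n) (σ : S i) : L4 n S
  | neg (φ : L4 n S) : L4 n S
  | and (φ ψ : L4 n S) : L4 n S
  | B (i : Fin n) (φ : L4 n S) : L4 n S
  | Bpos (i : Fin n) (φ : L4 n S) : L4 n S
  | diam (φ : L4 n S) : L4 n S
  | conj (f : ℕ → L4 n S) : L4 n S
  | prGt (i : Fin n) (α : Set.Icc (0:ℝ) 1) (φ : L4 n S) : L4 n S

def Sat4 [∀ j, Fintype (S j)] (u : ∀ i : Fin n, (∀ j, S j) → ℝ) :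
    L4 n S → (M : PStruct n S) → M.Ω → Prop
  | .tt, _, _ => True
  | .RAT i, M, ω => SatRAT u M i ω
  | .play i σ, M, ω => M.s ω i = σ
  | .neg φ, M, ω => ¬ Sat4 u φ M ω
  | .and φ ψ, M, ω => Sat4 u φ M ω ∧ Sat4 u ψ M ω
  | .B i φ, M, ω => ∃ A, MeasurableSet[M.F] A ∧ A ⊆ {ω' | Sat4 u φ M ω'} ∧ M.PR i ω A = 1
  | .Bpos i φ, M, ω => ∃ A, MeasurableSet[M.F] A ∧ A ⊆ {ω' | Sat4 u φ M ω'} ∧ 0 < M.PR i ω A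
  | .diam φ, _, _ => ∃ (M' : PStruct n S) (ω' : M'.Ω), Sat4 u φ M' ω'
  | .conj f, M, ω => ∀ m, Sat4 u (f m) M ω
  | .prGt i α φ, M, ω => (α : ℝ) < (M.PR i ω {ω' | Sat4 u φ M ω'}).toReal

def conjList4 : List (L4 n S) → L4 n S
  | [] => .tt
  | φ :: l => .and φ (conjList4 l)

noncomputable def conjFin4 {α : Type} [Fintype α] (f : α → L4 n S) : L4 n S :=
  conjList4 (Finset.univ.toList.map f)

/-- material implication `φ ⇒ ψ` -/
def impF4 (φ ψ : L4 n S) : L4 n S := .neg (.and φ (.neg ψ))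

/-! ### The canonical structure -/

section
variable [∀ j, Fintype (S j)]

/-- `Ψ ⊆ L4(Γ)` is L4-realizable. -/
def L4Real (u : ∀ i : Fin n, (∀ j, S j) → ℝ) (Ψ : Set (L4 n S)) : Prop :=
  ∃ (M : PStruct n S) (ω : M.Ω), ∀ φ : L4 n S, Sat4 u φ M ω ↔ φ ∈ Ψ

/-- The states of the canonical structure: the L4-realizable sets of formulas. -/
def Ωc (u : ∀ i : Fin n, (∀ j, S j) → ℝ) : Type := {Φ : Set (L4 n S) // L4Real u Φ}

/-- `F_φ = {ω_Φ : φ ∈ Φ}`. -/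
def Fset (u : ∀ i : Fin n, (∀ j, S j) → ℝ) (φ : L4 n S) : Set (Ωc u) := {Φ | φ ∈ Φ.1}

/-- `play(σ⃗) := ∧_j play_j(σ_j)`. -/
noncomputable def playAll (p : ∀ j, S j) : L4 n S := conjFin4 fun j => L4.play j (p j)

/-- `s^c(ω_Φ)`: the strategy profile `σ⃗` with `play(σ⃗) ∈ Φ`. -/
noncomputable def scanon (u : ∀ i : Fin n, (∀ j, S j) → ℝ) [∀ j, Nonempty (S j)]
    (Φ : Ωc u) : ∀ j, S j :=
  Classical.epsilon fun p => playAll p ∈ Φ.1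

/-- The value that `PR^c_i(ω_Φ)` must take on `F_φ`: the paper writes
`inf {α : (pr_i(φ) > α) ∈ Φ}`, which (as the set of such `α` is `[0, p)` where `p` is
the probability of `φ` in `Φ`) we read as the supremum of the `α ∈ [0,1]` with
`(pr_i(φ) > α) ∈ Φ`. -/
noncomputable def canonVal (u : ∀ i : Fin n, (∀ j, S j) → ℝ) (i : Fin n) (Φ : Ωc u)
    (φ : L4 n S) : ENNReal :=
  ENNReal.ofReal (sSup {α : ℝ | ∃ h : α ∈ Set.Icc (0:ℝ) 1, L4.prGt i ⟨α, h⟩ φ ∈ Φ.1})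

end

end IA

theorem Real.sSup_Ico_zero {b : ℝ} (hb : 0 ≤ b) : sSup (Set.Ico 0 b) = b := by
  rcases hb.eq_or_lt with rfl | hlt
  · simp
  · exact csSup_Ico hlt

namespace MeasureTheory

variable {α : Type*} [MeasurableSpace α] (μ : Measure α) [IsProbabilityMeasure μ] (s : Set α)

theorem exists_measurableSet_subset_measure_eq_one_iff :
    (∃ A, MeasurableSet A ∧ A ⊆ s ∧ μ A = 1) ↔ μ sᶜ = 0 := by
  constructor
  · rintro ⟨A, hA, hAs, hA1⟩
    exact measure_mono_null (Set.compl_subset_compl.2 hAs) ((prob_compl_eq_zero_iff hA).2 hA1)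
  · intro hs
    refine ⟨(toMeasurable μ sᶜ)ᶜ, (measurableSet_toMeasurable _ _).compl,
      Set.compl_subset_comm.1 (subset_toMeasurable _ _), ?_⟩
    rw [prob_compl_eq_one_sub (measurableSet_toMeasurable _ _), measure_toMeasurable, hs,
      tsub_zero]

theorem exists_measurableSet_subset_measure_pos_iff :
    (∃ A, MeasurableSet A ∧ A ⊆ s ∧ 0 < μ A) ↔ μ sᶜ < 1 := by
  constructor
  · rintro ⟨A, hA, hAs, hApos⟩
    calc μ sᶜ ≤ μ Aᶜ := measure_mono (Set.compl_subset_compl.2 hAs)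
      _ = 1 - μ A := prob_compl_eq_one_sub hA
      _ < 1 := ENNReal.sub_lt_self ENNReal.one_ne_top one_ne_zero hApos.ne'
  · intro hs
    refine ⟨(toMeasurable μ sᶜ)ᶜ, (measurableSet_toMeasurable _ _).compl,
      Set.compl_subset_comm.1 (subset_toMeasurable _ _), ?_⟩
    rw [prob_compl_eq_one_sub (measurableSet_toMeasurable _ _), measure_toMeasurable]
    exact tsub_pos_of_lt hs

end MeasureTheory

namespace IA

variable {n : ℕ} {S : Fin n → Type} [∀ j, Fintype (S j)] (u : Fin n → (∀ j, S j) → ℝ)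

theorem sat_conjList (l : List (L4 n S)) (M : PStruct n S) (ω : M.Ω) :
    Sat4 u (conjList4 l) M ω ↔ ∀ φ ∈ l, Sat4 u φ M ω := by
  induction l with
  | nil => simp [conjList4, Sat4]
  | cons φ l ih => simp [conjList4, Sat4, ih]

theorem sat_conjFin {α : Type} [Fintype α] (f : α → L4 n S) (M : PStruct n S) (ω : M.Ω) :
    Sat4 u (conjFin4 f) M ω ↔ ∀ a, Sat4 u (f a) M ω := by
  simp [conjFin4, sat_conjList]

theorem sat_playAll (p : ∀ j, S j) (M : PStruct n S) (ω : M.Ω) :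
    Sat4 u (playAll p) M ω ↔ M.s ω = p := by
  rw [playAll, sat_conjFin, funext_iff]
  rfl

noncomputable def othPlay (i : Fin n) (τ : Oth S i) : L4 n S :=
  conjFin4 fun j : {j : Fin n // j ≠ i} => L4.play j.1 (τ j)

theorem sat_othPlay (i : Fin n) (τ : Oth S i) (M : PStruct n S) (ω : M.Ω) :
    Sat4 u (othPlay i τ) M ω ↔ ∀ j : {j : Fin n // j ≠ i}, M.s ω j.1 = τ j :=
  sat_conjFin u _ M ω

theorem sat_othPlay_congr (i : Fin n) (τ : Oth S i) {M M' : PStruct n S} {ω : M.Ω} {ω' : M'.Ω}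
    (hs : M.s ω = M'.s ω') : Sat4 u (othPlay i τ) M ω ↔ Sat4 u (othPlay i τ) M' ω' := by
  rw [sat_othPlay, sat_othPlay, hs]

theorem margBelief_eq_othPlay (M : PStruct n S) (i : Fin n) (ω : M.Ω) :
    margBelief M i ω = fun τ => (M.PR i ω {ω' | Sat4 u (othPlay i τ) M ω'}).toReal := by
  funext τ
  simp only [margBelief, sat_othPlay]

theorem sat_B_iff (M : PStruct n S) (ω : M.Ω) (i : Fin n) (φ : L4 n S) :
    Sat4 u (.B i φ) M ω ↔ M.PR i ω {ω' | Sat4 u (.neg φ) M ω'} = 0 :=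
  letI := M.F
  haveI := M.PR_prob i ω
  exists_measurableSet_subset_measure_eq_one_iff (M.PR i ω) _

theorem sat_Bpos_iff (M : PStruct n S) (ω : M.Ω) (i : Fin n) (φ : L4 n S) :
    Sat4 u (.Bpos i φ) M ω ↔ M.PR i ω {ω' | Sat4 u (.neg φ) M ω'} < 1 :=
  letI := M.F
  haveI := M.PR_prob i ω
  exists_measurableSet_subset_measure_pos_iff (M.PR i ω) _

def Realizes (M : PStruct n S) (ω : M.Ω) (Φ : Set (L4 n S)) : Prop :=
  ∀ φ, Sat4 u φ M ω ↔ φ ∈ Φ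

variable {u}

theorem scanon_eq [∀ j, Nonempty (S j)] {Φ : Ωc u} {M : PStruct n S} {ω : M.Ω}
    (h : Realizes u M ω Φ.1) : scanon u Φ = M.s ω := by
  have hspec : playAll (scanon u Φ) ∈ Φ.1 :=
    Classical.epsilon_spec (p := fun p => playAll p ∈ Φ.1)
      ⟨M.s ω, (h _).1 ((sat_playAll u _ M ω).2 rfl)⟩
  exact ((sat_playAll u _ M ω).1 ((h _).2 hspec)).symm

theorem canonVal_eq_measure {Φ : Ωc u} {M : PStruct n S} {ω : M.Ω} (h : Realizes u M ω Φ.1)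
    (i : Fin n) (φ : L4 n S) : canonVal u i Φ φ = M.PR i ω {ω' | Sat4 u φ M ω'} := by
  have := M.PR_prob i ω
  have hset : {α : ℝ | ∃ hα : α ∈ Set.Icc (0:ℝ) 1, L4.prGt i ⟨α, hα⟩ φ ∈ Φ.1}
      = Set.Ico 0 ((M.PR i ω).real {ω' | Sat4 u φ M ω'}) := by
    ext α
    exact ⟨fun ⟨hα, hmem⟩ => ⟨hα.1, (h _).2 hmem⟩,
      fun ⟨h0, hlt⟩ => ⟨⟨h0, hlt.le.trans measureReal_le_one⟩, (h _).1 hlt⟩⟩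
  rw [canonVal, hset, Real.sSup_Ico_zero measureReal_nonneg, measureReal_def,
    ENNReal.ofReal_toReal (measure_ne_top _ _)]

theorem canonical_measure_eq {Fc : MeasurableSpace (Ωc u)}
    {PR : Fin n → Ωc u → @Measure (Ωc u) Fc}
    (hPR : ∀ i Φ φ, PR i Φ (Fset u φ) = canonVal u i Φ φ) {P : Ωc u → Prop} {φ : L4 n S}
    (hP : ∀ (Φ : Ωc u) (M : PStruct n S) (ω : M.Ω),
      Realizes u M ω Φ.1 → (P Φ ↔ Sat4 u φ M ω))
    {Φ : Ωc u} {M : PStruct n S} {ω : M.Ω} (h : Realizes u M ω Φ.1) (i : Fin n) :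
    PR i Φ {Φ' | P Φ'} = M.PR i ω {ω' | Sat4 u φ M ω'} := by
  have hset : {Φ' | P Φ'} = Fset u φ := by
    ext Φ'
    obtain ⟨M', ω', h'⟩ := Φ'.2
    exact (hP Φ' M' ω' h').trans (h' φ)
  rw [hset, hPR, canonVal_eq_measure h]

theorem canonical_truth_lemma_general
    {S : Fin n → Type} [∀ j, Fintype (S j)] [∀ j, Nonempty (S j)]
    (u : ∀ i : Fin n, (∀ j, S j) → ℝ)
    (Fc : MeasurableSpace (Ωc u))
    (PR : Fin n → Ωc u → @Measure (Ωc u) Fc)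
    (hPR : ∀ (i : Fin n) (Φ : Ωc u) (φ : L4 n S), PR i Φ (Fset u φ) = canonVal u i Φ φ)
    (h1 : ∀ i ω, IsProbabilityMeasure (PR i ω))
    (h2 : ∀ (i : Fin n) (σ' : S i), MeasurableSet[Fc] {ω | scanon u ω i = σ'})
    (h3 : ∀ i ω, PR i ω {ω' | scanon u ω' i = scanon u ω i} = 1)
    (h4 : ∀ (i : Fin n) (π : @Measure (Ωc u) Fc), MeasurableSet[Fc] {ω | PR i ω = π})
    (h5 : ∀ i ω, PR i ω {ω' | PR i ω' = PR i ω} = 1) :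
    ∀ (ψ : L4 n S) (Φ : Ωc u),
      Sat4 u ψ (PStruct.mk (Ωc u) Fc (scanon u) PR h1 h2 h3 h4 h5) Φ ↔ ψ ∈ Φ.1 := by
  intro ψ Φ
  obtain ⟨M, ω, h⟩ := Φ.2
  refine Iff.trans ?_ (h ψ)
  induction ψ generalizing Φ M ω with
  | tt | diam _ => exact Iff.rfl
  | RAT i =>
    have hbelief (τ : Oth S i) := canonical_measure_eq hPR (fun Φ' M' ω' h' =>
      sat_othPlay_congr u i τ (M := ⟨_, _, _, _, h1, h2, h3, h4, h5⟩) (scanon_eq h')) h i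
    simp only [Sat4, SatRAT, margBelief_eq_othPlay u, hbelief, scanon_eq h]
  | play i σ => simp only [Sat4, scanon_eq h]
  | neg φ ih => exact not_congr (ih Φ M ω h)
  | and φ χ ihφ ihχ => exact and_congr (ihφ Φ M ω h) (ihχ Φ M ω h)
  | conj f ih => exact forall_congr' fun m => ih m Φ M ω h
  | B i φ ih =>
    rw [sat_B_iff, sat_B_iff, ← canonical_measure_eq hPR (φ := .neg φ)
      (fun Φ' M' ω' h' => not_congr (ih Φ' M' ω' h')) h]
    exact Iff.rfl
  | Bpos i φ ih =>
    rw [sat_Bpos_iff, sat_Bpos_iff, ← canonical_measure_eq hPR (φ := .neg φ)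
      (fun Φ' M' ω' h' => not_congr (ih Φ' M' ω' h')) h]
    exact Iff.rfl
  | prGt i α φ ih => simp only [Sat4, canonical_measure_eq hPR ih h]

/-- Truth lemma for the canonical structure: in the canonical structure,
a formula is true at the state `ω_Φ` iff it belongs to `Φ`. -/
theorem canonical_truth_lemma
    {S : Fin n → Type} [∀ j, Fintype (S j)] [∀ j, Nonempty (S j)]
    (u : ∀ i : Fin n, (∀ j, S j) → ℝ)
    (Fc : MeasurableSpace (Ωc u))
    (hFc : ∀ A : Set (Ωc u), MeasurableSet[Fc] A ↔ ∃ φ : L4 n S, A = Fset u φ)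
    (PR : Fin n → Ωc u → @Measure (Ωc u) Fc)
    (hPR : ∀ (i : Fin n) (Φ : Ωc u) (φ : L4 n S), PR i Φ (Fset u φ) = canonVal u i Φ φ)
    (h1 : ∀ i ω, IsProbabilityMeasure (PR i ω))
    (h2 : ∀ (i : Fin n) (σ' : S i), MeasurableSet[Fc] {ω | scanon u ω i = σ'})
    (h3 : ∀ i ω, PR i ω {ω' | scanon u ω' i = scanon u ω i} = 1)
    (h4 : ∀ (i : Fin n) (π : @Measure (Ωc u) Fc), MeasurableSet[Fc] {ω | PR i ω = π})
    (h5 : ∀ i ω, PR i ω {ω' | PR i ω' = PR i ω} = 1) :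
    ∀ (ψ : L4 n S) (Φ : Ωc u),
      Sat4 u ψ (PStruct.mk (Ωc u) Fc (scanon u) PR h1 h2 h3 h4 h5) Φ ↔ ψ ∈ Φ.1 :=
  canonical_truth_lemma_general u Fc PR hPR h1 h2 h3 h4 h5

end IA
end

section
/- If a formula φ ∈ L4(Γ) is satisfiable in some L4-measurable probability structure appropriate for Γ, then there exist an L4-measurable probability structure M appropriate for Γ and a state ω such that (M,ω) ⊨ φ, the singleton {ω} is measurable, and PR_j(ω)({ω}) = 0 for every player j = 1,…,n. -/
open MeasureTheory

namespace IA

set_option linter.unusedVariables false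

variable {n : ℕ}

variable {S : Fin n → Type}

/-!
Adjoin to the given structure a fresh copy of the state `ω₀` at which `φ` holds, with the same
strategies and beliefs as `ω₀`, and push every belief forward into the old states. No player
then gives the copy positive probability, and since the new structure maps onto the old one
preserving strategies and beliefs, the copy satisfies exactly the formulas `ω₀` satisfies.
-/

def foldCopy {α : Type*} (a : α) : α ⊕ Unit → α := Sum.elim id fun _ => a

section FoldCopy

variable {α : Type*} [MeasurableSpace α]

lemma measurable_foldCopy (a : α) : Measurable (foldCopy a) :=
  measurable_id.sumElim measurable_const

lemma measurableEmbedding_inl {β : Type*} [MeasurableSpace β] :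
    MeasurableEmbedding (Sum.inl : α → α ⊕ β) :=
  ⟨Sum.inl_injective, measurable_inl, fun _ => measurableSet_inl_image.2⟩

lemma map_inl_apply_preimage_foldCopy (μ : Measure α) (a : α) (T : Set α) :
    μ.map Sum.inl (foldCopy a ⁻¹' T) = μ T :=
  measurableEmbedding_inl.map_apply μ _

lemma measurableSet_setOf_comp_eq {β γ : Type*} {f : α → β} {g : β → γ}
    (hg : Function.Injective g) (hf : ∀ b, MeasurableSet {a | f a = b}) (c : γ) :
    MeasurableSet {a | g (f a) = c} := by
  by_cases hc : c ∈ Set.range g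
  · obtain ⟨b, rfl⟩ := hc
    simpa only [hg.eq_iff] using hf b
  · convert MeasurableSet.empty
    exact Set.eq_empty_of_forall_notMem fun a ha => hc ⟨f a, ha⟩

end FoldCopy

namespace PStruct

instance measurableSpace (M : PStruct n S) : MeasurableSpace M.Ω := M.F

variable (M : PStruct n S) (ω₀ : M.Ω)

noncomputable abbrev addNullCopy : PStruct n S where
  Ω := M.Ω ⊕ Unit
  F := inferInstance
  s := M.s ∘ foldCopy ω₀
  PR i x := (M.PR i (foldCopy ω₀ x)).map Sum.inl
  PR_prob i x :=
    haveI := M.PR_prob i (foldCopy ω₀ x)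
    Measure.isProbabilityMeasure_map measurable_inl.aemeasurable
  meas_play i σ := measurable_foldCopy ω₀ (M.meas_play i σ)
  knows_play i x :=
    (map_inl_apply_preimage_foldCopy _ ω₀ {ω | M.s ω i = M.s (foldCopy ω₀ x) i}).trans
      (M.knows_play i _)
  meas_PR i :=
    measurableSet_setOf_comp_eq measurableEmbedding_inl.map_injective
      fun ρ => measurable_foldCopy ω₀ (M.meas_PR i ρ)
  knows_PR i x := by
    simp only [measurableEmbedding_inl.map_injective.eq_iff]
    exact (map_inl_apply_preimage_foldCopy _ ω₀ _).trans (M.knows_PR i _)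

variable {M ω₀}

lemma addNullCopy_PR_apply (i : Fin n) (x : (M.addNullCopy ω₀).Ω)
    (A : Set (M.addNullCopy ω₀).Ω) :
    (M.addNullCopy ω₀).PR i x A = M.PR i (foldCopy ω₀ x) (Sum.inl ⁻¹' A) :=
  measurableEmbedding_inl.map_apply _ A

lemma margBelief_addNullCopy [∀ j, Fintype (S j)] (i : Fin n) (x : (M.addNullCopy ω₀).Ω) :
    margBelief (M.addNullCopy ω₀) i x = margBelief M i (foldCopy ω₀ x) :=
  funext fun τ => congrArg ENNReal.toReal <|
    map_inl_apply_preimage_foldCopy _ ω₀ {ω | ∀ j : {j : Fin n // j ≠ i}, M.s ω j.1 = τ j}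

lemma exists_measurableSet_subset_preimage_foldCopy_iff (R : ENNReal → Prop) (i : Fin n)
    (x : (M.addNullCopy ω₀).Ω) (T : Set M.Ω) :
    (∃ A, MeasurableSet[(M.addNullCopy ω₀).F] A ∧ A ⊆ foldCopy ω₀ ⁻¹' T ∧
        R ((M.addNullCopy ω₀).PR i x A)) ↔
      ∃ A, MeasurableSet[M.F] A ∧ A ⊆ T ∧ R (M.PR i (foldCopy ω₀ x) A) := by
  constructor
  · rintro ⟨A, hA, hAT, hR⟩
    refine ⟨Sum.inl ⁻¹' A, measurable_inl hA, fun ω hω => hAT hω, ?_⟩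
    rwa [addNullCopy_PR_apply] at hR
  · rintro ⟨A, hA, hAT, hR⟩
    refine ⟨foldCopy ω₀ ⁻¹' A, measurable_foldCopy ω₀ hA, Set.preimage_mono hAT, ?_⟩
    rwa [map_inl_apply_preimage_foldCopy]

theorem sat4_addNullCopy_iff [∀ j, Fintype (S j)] (u : ∀ i : Fin n, (∀ j, S j) → ℝ)
    (ψ : L4 n S) (x : (M.addNullCopy ω₀).Ω) :
    Sat4 u ψ (M.addNullCopy ω₀) x ↔ Sat4 u ψ M (foldCopy ω₀ x) := by
  induction ψ generalizing x with
  | tt | play | diam => rfl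
  | RAT i => simp only [Sat4, SatRAT, margBelief_addNullCopy]; rfl
  | neg φ ih => exact not_congr (ih x)
  | and φ ψ ihφ ihψ => exact and_congr (ihφ x) (ihψ x)
  | conj f ih => exact forall_congr' fun m => ih m x
  | B i φ ih =>
    simp only [Sat4, ih]
    exact exists_measurableSet_subset_preimage_foldCopy_iff (· = 1) i x {ω | Sat4 u φ M ω}
  | Bpos i φ ih =>
    simp only [Sat4, ih]
    exact exists_measurableSet_subset_preimage_foldCopy_iff (0 < ·) i x {ω | Sat4 u φ M ω}
  | prGt i α φ ih =>
    simp only [Sat4, ih]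
    rw [← Set.preimage_ofPred_eq, map_inl_apply_preimage_foldCopy]

lemma measurableSet_singleton_inr : MeasurableSet[(M.addNullCopy ω₀).F] {Sum.inr ()} := by
  simpa only [Set.range_unique] using measurableSet_range_inr (α := M.Ω) (β := Unit)

lemma addNullCopy_PR_singleton_inr (j : Fin n) :
    (M.addNullCopy ω₀).PR j (Sum.inr ()) {Sum.inr ()} = 0 := by
  rw [← Set.range_unique, addNullCopy_PR_apply, Set.preimage_inl_range_inr, measure_empty]

end PStruct

theorem satisfiable_at_null_state_general
    {S : Fin n → Type} [∀ j, Fintype (S j)]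
    (u : ∀ i : Fin n, (∀ j, S j) → ℝ) (φ : L4 n S)
    (hsat : ∃ (M : PStruct n S) (ω : M.Ω),
      (∀ ψ : L4 n S, MeasurableSet[M.F] {ω' | Sat4 u ψ M ω'}) ∧ Sat4 u φ M ω) :
    ∃ (M : PStruct n S) (ω : M.Ω),
      (∀ ψ : L4 n S, MeasurableSet[M.F] {ω' | Sat4 u ψ M ω'}) ∧
      Sat4 u φ M ω ∧
      MeasurableSet[M.F] {ω} ∧
      ∀ j : Fin n, M.PR j ω {ω} = 0 := by
  obtain ⟨M, ω₀, hmeas, hφ⟩ := hsat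
  refine ⟨M.addNullCopy ω₀, Sum.inr (), fun ψ => ?_,
    (PStruct.sat4_addNullCopy_iff u φ _).2 hφ, PStruct.measurableSet_singleton_inr,
    PStruct.addNullCopy_PR_singleton_inr⟩
  simpa only [Set.preimage_ofPred_eq, PStruct.sat4_addNullCopy_iff] using
    measurable_foldCopy ω₀ (hmeas ψ)

/-- Lemma: any satisfiable L4 formula is satisfiable at a state that is
measurable and has probability 0 for every player. -/
theorem satisfiable_at_null_state
    {S : Fin n → Type} [∀ j, Fintype (S j)] [∀ j, Nonempty (S j)]
    (u : ∀ i : Fin n, (∀ j, S j) → ℝ) (φ : L4 n S)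
    (hsat : ∃ (M : PStruct n S) (ω : M.Ω),
      (∀ ψ : L4 n S, MeasurableSet[M.F] {ω' | Sat4 u ψ M ω'}) ∧ Sat4 u φ M ω) :
    ∃ (M : PStruct n S) (ω : M.Ω),
      (∀ ψ : L4 n S, MeasurableSet[M.F] {ω' | Sat4 u ψ M ω'}) ∧
      Sat4 u φ M ω ∧
      MeasurableSet[M.F] {ω} ∧
      ∀ j : Fin n, M.PR j ω {ω} = 0 :=
  satisfiable_at_null_state_general u φ hsat

end IA
end

section
/- If for each player i = 1,…,n the formula φ_i ∈ L4_{i+} is satisfiable in an L4-measurable probability structure appropriate for Γ, then the conjunction φ_1 ∧ ⋯ ∧ φ_n is satisfiable in an L4-measurable probability structure appropriate for Γ. -/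
open MeasureTheory

namespace IA

set_option linter.unusedVariables false

variable {n : ℕ}

variable {S : Fin n → Type}

/-- `L4_{i+}`: `L4_i` (formulas with outermost operator `pr_i`) together with `true`,
`RAT_i` and `play_i(σ)`, closed under conjunction and negation. -/
inductive InL4iPlusC {S : Fin n → Type} (i : Fin n) : L4 n S → Prop where
  | tt : InL4iPlusC i .tt
  | RAT : InL4iPlusC i (.RAT i)
  | play (σ : S i) : InL4iPlusC i (.play i σ)
  | pr (α : Set.Icc (0:ℝ) 1) (φ : L4 n S) : InL4iPlusC i (.prGt i α φ)
  | neg {φ : L4 n S} : InL4iPlusC i φ → InL4iPlusC i (.neg φ)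
  | and {φ ψ : L4 n S} : InL4iPlusC i φ → InL4iPlusC i ψ → InL4iPlusC i (.and φ ψ)
  | conj {f : ℕ → L4 n S} : (∀ m, InL4iPlusC i (f m)) → InL4iPlusC i (.conj f)

/-! Take the disjoint union of structures `M_i` satisfying `φ_i` at `ω_i`, and add one
new state `ω*` at which player `i` plays `s_i(ω_i)` and believes what he believes at `ω_i` (moved
into the `i`-th copy). Every formula keeps its truth value on each copy, and a formula of
`L4_{i+}` only depends on player `i`'s strategy and beliefs, so `φ_i` holds at `ω*` for every `i`. -/

attribute [instance] PStruct.F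

theorem sat4_conjList4_iff [∀ j, Fintype (S j)] (u : ∀ i : Fin n, (∀ j, S j) → ℝ)
    (M : PStruct n S) (ω : M.Ω) (l : List (L4 n S)) :
    Sat4 u (conjList4 l) M ω ↔ ∀ ψ ∈ l, Sat4 u ψ M ω := by
  induction l with
  | nil => simp [conjList4, Sat4]
  | cons φ l ih => simp [conjList4, Sat4, ih]

theorem sat4_conjFin4_iff [∀ j, Fintype (S j)] (u : ∀ i : Fin n, (∀ j, S j) → ℝ)
    (M : PStruct n S) (ω : M.Ω) {α : Type} [Fintype α] (φ : α → L4 n S) :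
    Sat4 u (conjFin4 φ) M ω ↔ ∀ a, Sat4 u (φ a) M ω := by
  simp [conjFin4, sat4_conjList4_iff]

theorem _root_.MeasurableEmbedding.measurableSet_setOf_map_eq {α β : Type*} [MeasurableSpace α]
    [MeasurableSpace β] {g : α → β} (hg : MeasurableEmbedding g) {γ : Type*} [MeasurableSpace γ]
    {P : γ → Measure α} (hP : ∀ μ, MeasurableSet {x | P x = μ}) (π : Measure β) :
    MeasurableSet {x | (P x).map g = π} := by
  by_cases hπ : ∃ μ : Measure α, μ.map g = π
  · obtain ⟨μ, rfl⟩ := hπ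
    simpa only [hg.map_injective.eq_iff] using hP μ
  · convert MeasurableSet.empty
    exact Set.eq_empty_of_forall_notMem fun x hx => hπ ⟨P x, hx⟩

structure PStruct.Embedding (M N : PStruct n S) where
  toFun : M.Ω → N.Ω
  measurableEmbedding : MeasurableEmbedding toFun
  s_apply : ∀ ω, N.s (toFun ω) = M.s ω
  PR_apply : ∀ i ω, N.PR i (toFun ω) = (M.PR i ω).map toFun

namespace PStruct.Embedding

variable {M N : PStruct n S}

instance : CoeFun (M.Embedding N) fun _ => M.Ω → N.Ω := ⟨toFun⟩

variable (f : M.Embedding N) {i : Fin n} {x : N.Ω} {w : M.Ω}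

theorem PR_setOf_eq (hPR : N.PR i x = (M.PR i w).map f) {P : N.Ω → Prop} {Q : M.Ω → Prop}
    (hPQ : ∀ w, P (f w) ↔ Q w) : N.PR i x {x | P x} = M.PR i w {w | Q w} := by
  rw [hPR, f.measurableEmbedding.map_apply]
  exact congrArg _ (Set.ext hPQ)

theorem margBelief_eq [∀ j, Fintype (S j)] (hPR : N.PR i x = (M.PR i w).map f) :
    margBelief N i x = margBelief M i w := by
  funext τ
  unfold margBelief
  rw [f.PR_setOf_eq hPR fun w => by rw [f.s_apply]]

theorem exists_measurableSet_subset_iff (hPR : N.PR i x = (M.PR i w).map f)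
    {P : N.Ω → Prop} {Q : M.Ω → Prop} (hPQ : ∀ w, P (f w) ↔ Q w) (R : ENNReal → Prop) :
    (∃ A, MeasurableSet A ∧ A ⊆ {x | P x} ∧ R (N.PR i x A)) ↔
      ∃ B, MeasurableSet B ∧ B ⊆ {w | Q w} ∧ R (M.PR i w B) := by
  have hf := f.measurableEmbedding
  constructor
  · rintro ⟨A, hA, hAP, hRA⟩
    refine ⟨f ⁻¹' A, hf.measurable hA, fun w hw => (hPQ w).1 (hAP hw), ?_⟩
    rwa [hPR, hf.map_apply] at hRA
  · rintro ⟨B, hB, hBQ, hRB⟩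
    refine ⟨f '' B, hf.measurableSet_image.2 hB, ?_, ?_⟩
    · rintro _ ⟨w, hw, rfl⟩
      exact (hPQ w).2 (hBQ hw)
    · rwa [hPR, hf.map_apply, Set.preimage_image_eq _ hf.injective]

variable [∀ j, Fintype (S j)] (u : ∀ i : Fin n, (∀ j, S j) → ℝ)

theorem sat4_iff (ψ : L4 n S) (w : M.Ω) : Sat4 u ψ N (f w) ↔ Sat4 u ψ M w := by
  induction ψ generalizing w with
  | tt | diam => rfl
  | play j σ =>
    show N.s (f w) j = σ ↔ M.s w j = σ
    rw [f.s_apply]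
  | RAT j =>
    show BestResponse u j (N.s (f w) j) _ ↔ BestResponse u j (M.s w j) _
    rw [f.s_apply, f.margBelief_eq (f.PR_apply j w)]
  | neg ψ ih => exact not_congr (ih w)
  | and ψ χ ihψ ihχ => exact and_congr (ihψ w) (ihχ w)
  | B j ψ ih => exact f.exists_measurableSet_subset_iff (f.PR_apply j w) ih (· = 1)
  | Bpos j ψ ih => exact f.exists_measurableSet_subset_iff (f.PR_apply j w) ih (0 < ·)
  | conj g ih => exact forall_congr' fun m => ih m w
  | prGt j α ψ ih =>
    show (α : ℝ) < _ ↔ (α : ℝ) < _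
    rw [f.PR_setOf_eq (f.PR_apply j w) ih]

theorem preimage_setOf_sat4 (ψ : L4 n S) : f ⁻¹' {x | Sat4 u ψ N x} = {w | Sat4 u ψ M w} :=
  Set.ext (f.sat4_iff u ψ)

theorem sat4_iff_of_inL4iPlusC {ψ : L4 n S} (hψ : InL4iPlusC i ψ) (hs : N.s x i = M.s w i)
    (hPR : N.PR i x = (M.PR i w).map f) : Sat4 u ψ N x ↔ Sat4 u ψ M w := by
  induction hψ with
  | tt | play => simp only [Sat4, hs]
  | RAT =>
    show BestResponse u i (N.s x i) _ ↔ BestResponse u i (M.s w i) _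
    rw [hs, f.margBelief_eq hPR]
  | pr α ψ =>
    show (α : ℝ) < _ ↔ (α : ℝ) < _
    rw [f.PR_setOf_eq hPR (f.sat4_iff u ψ)]
  | neg _ ih => exact not_congr ih
  | and _ _ ihψ ihχ => exact and_congr ihψ ihχ
  | conj _ ih => exact forall_congr' ih

end PStruct.Embedding

section Glue

variable (Ms : Fin n → PStruct n S) (ω₀ : ∀ i, (Ms i).Ω)

def GlueΩ : Type := Option (Σ i, (Ms i).Ω)

def glueEmb (i : Fin n) (w : (Ms i).Ω) : GlueΩ Ms := some ⟨i, w⟩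

instance : MeasurableSpace (GlueΩ Ms) := ⨅ i, (Ms i).F.map (glueEmb Ms i)

theorem measurableSet_glueΩ_iff {T : Set (GlueΩ Ms)} :
    MeasurableSet T ↔ ∀ i, MeasurableSet (glueEmb Ms i ⁻¹' T) :=
  MeasurableSpace.measurableSet_iInf

theorem glueEmb_injective (i : Fin n) : Function.Injective (glueEmb Ms i) := by
  intro w w' h
  cases h
  rfl

theorem glueEmb_preimage_image_of_ne {i j : Fin n} (h : i ≠ j) (A : Set (Ms i).Ω) :
    glueEmb Ms j ⁻¹' (glueEmb Ms i '' A) = ∅ := by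
  refine Set.eq_empty_of_forall_notMem fun w ⟨w', _, hw'⟩ => h ?_
  exact congrArg Sigma.fst (Option.some.inj hw')

theorem measurableEmbedding_glueEmb (i : Fin n) : MeasurableEmbedding (glueEmb Ms i) where
  injective := glueEmb_injective Ms i
  measurable := Measurable.of_le_map (iInf_le _ i)
  measurableSet_image' A hA := by
    refine (measurableSet_glueΩ_iff Ms).2 fun j => ?_
    obtain rfl | h := eq_or_ne i j
    · rwa [Set.preimage_image_eq A (glueEmb_injective Ms i)]
    · rw [glueEmb_preimage_image_of_ne Ms h]
      exact MeasurableSet.empty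

def glueRep (j : Fin n) (x : GlueΩ Ms) : Σ i, (Ms i).Ω := x.getD ⟨j, ω₀ j⟩

noncomputable def glue : PStruct n S where
  Ω := GlueΩ Ms
  F := inferInstance
  s x j := (Ms (glueRep Ms ω₀ j x).1).s (glueRep Ms ω₀ j x).2 j
  PR j x := ((Ms (glueRep Ms ω₀ j x).1).PR j (glueRep Ms ω₀ j x).2).map (glueEmb Ms _)
  PR_prob j x :=
    have := (Ms (glueRep Ms ω₀ j x).1).PR_prob j (glueRep Ms ω₀ j x).2
    Measure.isProbabilityMeasure_map (measurableEmbedding_glueEmb Ms _).measurable.aemeasurable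
  meas_play j σ := (measurableSet_glueΩ_iff Ms).2 fun i => (Ms i).meas_play j σ
  knows_play j x := by
    rw [(measurableEmbedding_glueEmb Ms _).map_apply]
    exact (Ms _).knows_play j _
  meas_PR j π := (measurableSet_glueΩ_iff Ms).2 fun i =>
    (measurableEmbedding_glueEmb Ms i).measurableSet_setOf_map_eq ((Ms i).meas_PR j) π
  knows_PR j x := by
    rw [(measurableEmbedding_glueEmb Ms _).map_apply]
    convert (Ms _).knows_PR j (glueRep Ms ω₀ j x).2 using 2
    ext w
    exact (measurableEmbedding_glueEmb Ms _).map_injective.eq_iff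

def glueEmbedding (i : Fin n) : (Ms i).Embedding (glue Ms ω₀) where
  toFun := glueEmb Ms i
  measurableEmbedding := measurableEmbedding_glueEmb Ms i
  s_apply _ := rfl
  PR_apply _ _ := rfl

end Glue

theorem jointly_satisfiable_general
    {S : Fin n → Type} [∀ j, Fintype (S j)]
    (u : ∀ i : Fin n, (∀ j, S j) → ℝ) (φ : ∀ i : Fin n, L4 n S)
    (hfrag : ∀ i, InL4iPlusC i (φ i))
    (hsat : ∀ i, ∃ (M : PStruct n S) (ω : M.Ω),
      (∀ ψ : L4 n S, MeasurableSet[M.F] {ω' | Sat4 u ψ M ω'}) ∧ Sat4 u (φ i) M ω) :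
    ∃ (M : PStruct n S) (ω : M.Ω),
      (∀ ψ : L4 n S, MeasurableSet[M.F] {ω' | Sat4 u ψ M ω'}) ∧
      Sat4 u (conjFin4 φ) M ω := by
  choose Ms ω₀ hmeas hφ using hsat
  refine ⟨glue Ms ω₀, (none : GlueΩ Ms), fun ψ => (measurableSet_glueΩ_iff Ms).2 fun i => ?_, ?_⟩
  · exact (glueEmbedding Ms ω₀ i).preimage_setOf_sat4 u ψ ▸ hmeas i ψ
  · refine (sat4_conjFin4_iff u _ _ φ).2 fun i => ?_
    exact ((glueEmbedding Ms ω₀ i).sat4_iff_of_inL4iPlusC u (hfrag i) rfl rfl).2 (hφ i)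

/-- Lemma: satisfiable formulas `φ_i ∈ L4_{i+}` for the different players
are jointly satisfiable. -/
theorem jointly_satisfiable
    {S : Fin n → Type} [∀ j, Fintype (S j)] [∀ j, Nonempty (S j)]
    (u : ∀ i : Fin n, (∀ j, S j) → ℝ) (φ : ∀ i : Fin n, L4 n S)
    (hfrag : ∀ i, InL4iPlusC i (φ i))
    (hsat : ∀ i, ∃ (M : PStruct n S) (ω : M.Ω),
      (∀ ψ : L4 n S, MeasurableSet[M.F] {ω' | Sat4 u ψ M ω'}) ∧ Sat4 u (φ i) M ω) :
    ∃ (M : PStruct n S) (ω : M.Ω),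
      (∀ ψ : L4 n S, MeasurableSet[M.F] {ω' | Sat4 u ψ M ω'}) ∧
      Sat4 u (conjFin4 φ) M ω :=
  jointly_satisfiable_general u φ hfrag hsat

end IA
end

section
/- Every formula of L3(Γ) is semantically equivalent (true at exactly the same states of all probability structures appropriate for Γ) to a finite disjunction of basic formulas, where a basic formula is a conjunction ψ_1 ∧ ⋯ ∧ ψ_n with ψ_i ∈ L3_{i+} for each i. -/
open MeasureTheory

namespace IA

set_option linter.unusedVariables false

variable {n : ℕ}

variable {S : Fin n → Type}

/-! ### The language L3 (`pr_i(φ) ≥ α` and `pr_i(φ) > α` for rational `α ∈ [0,1]`) -/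

inductive L3 (n : ℕ) (S : Fin n → Type) : Type where
  | tt : L3 n S
  | RAT (i : Fin n) : L3 n S
  | play (i : Fin n) (σ : S i) : L3 n S
  | neg (φ : L3 n S) : L3 n S
  | and (φ ψ : L3 n S) : L3 n S
  | B (i : Fin n) (φ : L3 n S) : L3 n S
  | Bpos (i : Fin n) (φ : L3 n S) : L3 n S
  | diam (φ : L3 n S) : L3 n S
  | prGe (i : Fin n) (α : Set.Icc (0:ℚ) 1) (φ : L3 n S) : L3 n S
  | prGt (i : Fin n) (α : Set.Icc (0:ℚ) 1) (φ : L3 n S) : L3 n S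

def Sat3 [∀ j, Fintype (S j)] (u : ∀ i : Fin n, (∀ j, S j) → ℝ) :
    L3 n S → (M : PStruct n S) → M.Ω → Prop
  | .tt, _, _ => True
  | .RAT i, M, ω => SatRAT u M i ω
  | .play i σ, M, ω => M.s ω i = σ
  | .neg φ, M, ω => ¬ Sat3 u φ M ω
  | .and φ ψ, M, ω => Sat3 u φ M ω ∧ Sat3 u ψ M ω
  | .B i φ, M, ω => ∃ A, MeasurableSet[M.F] A ∧ A ⊆ {ω' | Sat3 u φ M ω'} ∧ M.PR i ω A = 1
  | .Bpos i φ, M, ω => ∃ A, MeasurableSet[M.F] A ∧ A ⊆ {ω' | Sat3 u φ M ω'} ∧ 0 < M.PR i ω A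
  | .diam φ, _, _ => ∃ (M' : PStruct n S) (ω' : M'.Ω), Sat3 u φ M' ω'
  | .prGe i α φ, M, ω => ((α : ℚ) : ℝ) ≤ (M.PR i ω {ω' | Sat3 u φ M ω'}).toReal
  | .prGt i α φ, M, ω => ((α : ℚ) : ℝ) < (M.PR i ω {ω' | Sat3 u φ M ω'}).toReal

/-- `L3_{i+}`: `L3_i` together with `true`, `RAT_i`, `play_i(σ)`, closed under conjunction
and negation. -/
inductive InL3iPlusC (i : Fin n) : L3 n S → Prop where
  | tt : InL3iPlusC i .tt
  | RAT : InL3iPlusC i (.RAT i)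
  | play (σ : S i) : InL3iPlusC i (.play i σ)
  | prGe (α : Set.Icc (0:ℚ) 1) (φ : L3 n S) : InL3iPlusC i (.prGe i α φ)
  | prGt (α : Set.Icc (0:ℚ) 1) (φ : L3 n S) : InL3iPlusC i (.prGt i α φ)
  | neg {φ : L3 n S} : InL3iPlusC i φ → InL3iPlusC i (.neg φ)
  | and {φ ψ : L3 n S} : InL3iPlusC i φ → InL3iPlusC i ψ → InL3iPlusC i (.and φ ψ)

/-- `L3_{(-i)+} = ∪_{j ≠ i} L3_{j+}`. -/
def InL3MinusPlusC (i : Fin n) (ψ : L3 n S) : Prop := ∃ j, j ≠ i ∧ InL3iPlusC j ψ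

def conjList3 : List (L3 n S) → L3 n S
  | [] => .tt
  | φ :: l => .and φ (conjList3 l)

def orF3 (φ ψ : L3 n S) : L3 n S := .neg (.and (.neg φ) (.neg ψ))

/-- finite disjunction (the empty disjunction is `false = ¬ true`) -/
def disjList3 : List (L3 n S) → L3 n S
  | [] => .neg .tt
  | φ :: l => orF3 φ (disjList3 l)

/-- finite conjunction over all players -/
def conjPlayers3 (ψ : Fin n → L3 n S) : L3 n S := conjList3 ((List.finRange n).map ψ)

/-!
Boolean connectives are handled by pushing them through disjunctive normal form, with the
conjunct of player `i` collecting everything that mentions only player `i`. The modal operators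
reduce to basic formulas by introspection: `B_i φ` and `⟨B_i⟩ φ` depend on the state only through
`PR_i`, and player `i` assigns probability one to the states with the same `PR_i`, so each of
them is equivalent to `pr_i(·) ≥ 1` applied to itself, a formula of `L3_i`. Finally `◇ φ` does
not depend on the state at all, so it is equivalent to `true` or to `false`.
-/

theorem _root_.MeasureTheory.measure_eq_one_iff_of_forall_mem_iff {α : Type*}
    {m : MeasurableSpace α} {μ : Measure α} [IsProbabilityMeasure μ] {s K : Set α} {p : Prop}
    (hK : MeasurableSet K) (hK1 : μ K = 1) (hs : ∀ x ∈ K, x ∈ s ↔ p) : μ s = 1 ↔ p := by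
  constructor
  · intro hs1
    obtain ⟨x, hxs, hxK⟩ : (s ∩ K).Nonempty :=
      nonempty_inter_of_measure_lt_add μ hK (Set.subset_univ s) (Set.subset_univ K)
        (by rw [hs1, hK1, measure_univ]; norm_num)
    exact (hs x hxK).1 hxs
  · intro hp
    exact le_antisymm prob_le_one (hK1 ▸ measure_mono fun x hx => (hs x hx).2 hp)

section

variable [∀ j, Fintype (S j)] (u : ∀ i : Fin n, (∀ j, S j) → ℝ) (M : PStruct n S) (ω : M.Ω)

lemma sat_conjList3 (l : List (L3 n S)) :
    Sat3 u (conjList3 l) M ω ↔ ∀ χ ∈ l, Sat3 u χ M ω := by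
  induction l with
  | nil => simp [conjList3, Sat3]
  | cons φ l ih => simp [conjList3, Sat3, ih]

lemma sat_orF3 (φ ψ : L3 n S) :
    Sat3 u (orF3 φ ψ) M ω ↔ Sat3 u φ M ω ∨ Sat3 u ψ M ω := by
  simp only [orF3, Sat3]
  tauto

lemma sat_disjList3 (l : List (L3 n S)) :
    Sat3 u (disjList3 l) M ω ↔ ∃ χ ∈ l, Sat3 u χ M ω := by
  induction l with
  | nil => simp [disjList3, Sat3]
  | cons φ l ih => simp [disjList3, sat_orF3, ih]

lemma sat_conjPlayers3 (ψ : Fin n → L3 n S) :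
    Sat3 u (conjPlayers3 ψ) M ω ↔ ∀ i, Sat3 u (ψ i) M ω := by
  simp [conjPlayers3, sat_conjList3]

lemma sat_prGe_one_iff (i : Fin n) (φ : L3 n S) :
    Sat3 u (.prGe i 1 φ) M ω ↔ M.PR i ω {ω' | Sat3 u φ M ω'} = 1 := by
  have := M.PR_prob i ω
  have hle : (M.PR i ω {ω' | Sat3 u φ M ω'}).toReal ≤ 1 :=
    ENNReal.toReal_le_of_le_ofReal zero_le_one (by simpa using prob_le_one)
  rw [Sat3, Set.Icc.coe_one, Rat.cast_one, ← ENNReal.toReal_eq_one_iff]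
  exact ⟨fun h => le_antisymm hle h, ge_of_eq⟩

lemma sat_iff_prGe_one_of_PR_eq {i : Fin n} {φ : L3 n S}
    (hdep : ∀ ω ω' : M.Ω, M.PR i ω = M.PR i ω' → (Sat3 u φ M ω ↔ Sat3 u φ M ω')) :
    Sat3 u φ M ω ↔ Sat3 u (.prGe i 1 φ) M ω := by
  have := M.PR_prob i ω
  rw [sat_prGe_one_iff]
  exact (measure_eq_one_iff_of_forall_mem_iff (M.meas_PR i _) (M.knows_PR i ω)
    fun ω' hω' => hdep ω' ω hω').symm

end

/-- A list of families `f : Fin n → L3 n S` in disjunctive normal form: it stands for the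
disjunction of the basic formulas `f 0 ∧ ⋯ ∧ f (n-1)`. -/
def IsDNF (L : List (Fin n → L3 n S)) : Prop := ∀ f ∈ L, ∀ i, InL3iPlusC i (f i)

def basicAt (i : Fin n) (χ : L3 n S) : Fin n → L3 n S := Function.update (fun _ => .tt) i χ

def dnfAnd (L₁ L₂ : List (Fin n → L3 n S)) : List (Fin n → L3 n S) :=
  L₁.flatMap fun f => L₂.map fun g i => .and (f i) (g i)

/-- `¬ ⋁_k ⋀_i f_k i` is `⋀_k ⋁_i ¬ f_k i`, distributed back into normal form. -/
def dnfNeg : List (Fin n → L3 n S) → List (Fin n → L3 n S)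
  | [] => [fun _ => .tt]
  | f :: L => dnfAnd ((List.finRange n).map fun i => basicAt i (.neg (f i))) (dnfNeg L)

lemma isDNF_singleton_basicAt {i : Fin n} {χ : L3 n S} (h : InL3iPlusC i χ) :
    IsDNF [basicAt i χ] := by
  intro f hf j
  rw [List.mem_singleton.1 hf, basicAt, Function.update_apply]
  split_ifs with hj
  · exact hj ▸ h
  · exact .tt

lemma IsDNF.dnfAnd {L₁ L₂ : List (Fin n → L3 n S)} (h₁ : IsDNF L₁) (h₂ : IsDNF L₂) :
    IsDNF (dnfAnd L₁ L₂) := by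
  simp only [IsDNF, IA.dnfAnd, List.mem_flatMap, List.mem_map]
  rintro _ ⟨f, hf, g, hg, rfl⟩ i
  exact .and (h₁ f hf i) (h₂ g hg i)

lemma IsDNF.dnfNeg : ∀ {L : List (Fin n → L3 n S)}, IsDNF L → IsDNF (IA.dnfNeg L)
  | [], _ => by simp [IsDNF, IA.dnfNeg, InL3iPlusC.tt]
  | f :: L, h => by
    refine IsDNF.dnfAnd ?_ (IsDNF.dnfNeg fun g hg => h g (List.mem_cons_of_mem f hg))
    simp only [IsDNF, List.mem_map]
    rintro _ ⟨i, -, rfl⟩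
    exact isDNF_singleton_basicAt (.neg (h f List.mem_cons_self i)) _ List.mem_cons_self

section

variable [∀ j, Fintype (S j)] (u : ∀ i : Fin n, (∀ j, S j) → ℝ)

def SatDNF (L : List (Fin n → L3 n S)) (M : PStruct n S) (ω : M.Ω) : Prop :=
  ∃ f ∈ L, ∀ i, Sat3 u (f i) M ω

def HasDNF (φ : L3 n S) : Prop :=
  ∃ L, IsDNF L ∧ ∀ (M : PStruct n S) (ω : M.Ω), Sat3 u φ M ω ↔ SatDNF u L M ω

variable (M : PStruct n S) (ω : M.Ω)

lemma forall_sat_basicAt_iff (i : Fin n) (χ : L3 n S) :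
    (∀ j, Sat3 u (basicAt i χ j) M ω) ↔ Sat3 u χ M ω := by
  refine ⟨fun h => by simpa [basicAt] using h i, fun h j => ?_⟩
  rw [basicAt, Function.update_apply]
  split_ifs
  · exact h
  · trivial

lemma satDNF_dnfAnd (L₁ L₂ : List (Fin n → L3 n S)) :
    SatDNF u (dnfAnd L₁ L₂) M ω ↔ SatDNF u L₁ M ω ∧ SatDNF u L₂ M ω := by
  simp only [SatDNF, dnfAnd, List.mem_flatMap, List.mem_map]
  constructor
  · rintro ⟨_, ⟨f, hf, g, hg, rfl⟩, h⟩
    exact ⟨⟨f, hf, fun i => (h i).1⟩, ⟨g, hg, fun i => (h i).2⟩⟩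
  · rintro ⟨⟨f, hf, hf'⟩, ⟨g, hg, hg'⟩⟩
    exact ⟨_, ⟨f, hf, g, hg, rfl⟩, fun i => ⟨hf' i, hg' i⟩⟩

lemma satDNF_dnfNeg (L : List (Fin n → L3 n S)) :
    SatDNF u (dnfNeg L) M ω ↔ ¬ SatDNF u L M ω := by
  induction L with
  | nil => simp [SatDNF, dnfNeg, Sat3]
  | cons f L ih =>
    rw [dnfNeg, satDNF_dnfAnd, ih]
    simp [SatDNF, forall_sat_basicAt_iff, Sat3]

lemma HasDNF.of_iff {φ ψ : L3 n S} (hψ : HasDNF u ψ)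
    (h : ∀ (M : PStruct n S) (ω : M.Ω), Sat3 u φ M ω ↔ Sat3 u ψ M ω) : HasDNF u φ :=
  let ⟨L, hL, hψL⟩ := hψ
  ⟨L, hL, fun M ω => (h M ω).trans (hψL M ω)⟩

lemma hasDNF_of_inL3iPlusC {i : Fin n} {χ : L3 n S} (h : InL3iPlusC i χ) : HasDNF u χ :=
  ⟨[basicAt i χ], isDNF_singleton_basicAt h, fun M ω => by
    simp [SatDNF, forall_sat_basicAt_iff]⟩

lemma hasDNF_of_sat_iff_const {φ : L3 n S} (p : Prop)
    (h : ∀ (M : PStruct n S) (ω : M.Ω), Sat3 u φ M ω ↔ p) : HasDNF u φ := by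
  by_cases hp : p
  · exact ⟨[fun _ => .tt], fun _ hf i => List.mem_singleton.1 hf ▸ .tt, fun M ω => by
      simp [SatDNF, Sat3, h, hp]⟩
  · exact ⟨[], by simp [IsDNF], fun M ω => by simp [SatDNF, h, hp]⟩

lemma hasDNF_of_PR_eq {i : Fin n} {φ : L3 n S}
    (hdep : ∀ (M : PStruct n S) (ω ω' : M.Ω),
      M.PR i ω = M.PR i ω' → (Sat3 u φ M ω ↔ Sat3 u φ M ω')) : HasDNF u φ :=
  (hasDNF_of_inL3iPlusC u (.prGe 1 φ)).of_iff u fun M ω =>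
    sat_iff_prGe_one_of_PR_eq u M ω (hdep M)

lemma hasDNF (φ : L3 n S) : HasDNF u φ := by
  induction φ with
  | tt => exact hasDNF_of_sat_iff_const u True fun _ _ => iff_true_intro trivial
  | RAT i => exact hasDNF_of_inL3iPlusC u .RAT
  | play i σ => exact hasDNF_of_inL3iPlusC u (.play σ)
  | prGe i α φ => exact hasDNF_of_inL3iPlusC u (.prGe α φ)
  | prGt i α φ => exact hasDNF_of_inL3iPlusC u (.prGt α φ)
  | B i φ => exact hasDNF_of_PR_eq u (i := i) fun M ω ω' h => by simp only [Sat3, h]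
  | Bpos i φ => exact hasDNF_of_PR_eq u (i := i) fun M ω ω' h => by simp only [Sat3, h]
  | diam φ => exact hasDNF_of_sat_iff_const u _ fun _ _ => Iff.rfl
  | neg φ ih =>
    obtain ⟨L, hL, hφ⟩ := ih
    exact ⟨dnfNeg L, hL.dnfNeg, fun M ω => by rw [satDNF_dnfNeg, ← hφ]; rfl⟩
  | and φ ψ ihφ ihψ =>
    obtain ⟨L₁, hL₁, hφ⟩ := ihφ
    obtain ⟨L₂, hL₂, hψ⟩ := ihψ
    exact ⟨dnfAnd L₁ L₂, hL₁.dnfAnd hL₂, fun M ω => by rw [satDNF_dnfAnd, ← hφ, ← hψ]; rfl⟩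

end

theorem L3_equiv_disjunction_of_basic_general
    {S : Fin n → Type} [∀ j, Fintype (S j)]
    (u : ∀ i : Fin n, (∀ j, S j) → ℝ) (φ : L3 n S) :
    ∃ l : List (L3 n S),
      (∀ χ ∈ l, ∃ ψ : Fin n → L3 n S, (∀ i, InL3iPlusC i (ψ i)) ∧ χ = conjPlayers3 ψ) ∧
      ∀ (M : PStruct n S) (ω : M.Ω), Sat3 u φ M ω ↔ Sat3 u (disjList3 l) M ω := by
  obtain ⟨L, hL, hφ⟩ := hasDNF u φ
  refine ⟨L.map conjPlayers3, ?_, fun M ω => ?_⟩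
  · simp only [List.mem_map]
    rintro _ ⟨f, hf, rfl⟩
    exact ⟨f, hL f hf, rfl⟩
  · simp [hφ, SatDNF, sat_disjList3, sat_conjPlayers3]

/-- Lemma: every L3 formula is semantically equivalent to a finite
disjunction of basic formulas `ψ_1 ∧ ⋯ ∧ ψ_n` with `ψ_i ∈ L3_{i+}`. -/
theorem L3_equiv_disjunction_of_basic
    {S : Fin n → Type} [∀ j, Fintype (S j)] [∀ j, Nonempty (S j)]
    (u : ∀ i : Fin n, (∀ j, S j) → ℝ) (φ : L3 n S) :
    ∃ l : List (L3 n S),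
      (∀ χ ∈ l, ∃ ψ : Fin n → L3 n S, (∀ i, InL3iPlusC i (ψ i)) ∧ χ = conjPlayers3 ψ) ∧
      ∀ (M : PStruct n S) (ω : M.Ω), Sat3 u φ M ω ↔ Sat3 u (disjList3 l) M ω :=
  L3_equiv_disjunction_of_basic_general u φ

end IA
end
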